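/- arXiv:2408.12001 — 2 statements merged into one kernel-verified Lean document; each statement's English description precedes it below -/
import Mathlib

section
/- (Proposition 4, rank guarantee of the Vickrey auction.) Let v = (v¹,…,vᴺ) be a valuation profile with N ≥ M + 1, and suppose each bidder's valuation exhibits weak substitutability: Σ_{s∈b} vⁿ({s}) ≥ vⁿ(b) for every bundle b and bidder n. Then there exists an efficient assignment b* with ∪ₙ b*ₙ = S, and for every efficient assignment b* that allocates all items (∪ₙ b*ₙ = S), the VCG revenue satisfies R_VCG(v; b*) ≥ Σ_{o∈S} v^{(M+1)}_{{o}}, where v^{(M+1)}_{{o}} is the (M+1)-th highest value among v¹({o}),…,vᴺ({o}); equivalently, R_VCG(v; b*) ≥ R^{M+1}_{𝓜_S}(v) where 𝓜_S is the menu of all singleton bundles. -/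
open MeasureTheory
open scoped ENNReal BigOperators

namespace RankGuaranteedAuctions

/-- A bundle of items, where the set of items is `Fin M`. -/
abbrev Bundle (M : ℕ) := Finset (Fin M)

/-- A valuation assigns a real value to every bundle. -/
abbrev Valuation (M : ℕ) := Bundle M → ℝ

/-- A valuation is normalized: value `0` for the empty bundle and values in `[0, vbar]`. -/
def IsValuation (M : ℕ) (vbar : ℝ) (v : Valuation M) : Prop :=
  v ∅ = 0 ∧ ∀ b : Bundle M, 0 ≤ v b ∧ v b ≤ vbar

/-- A menu is a nonempty collection of nonempty bundles. -/
def IsMenu (M : ℕ) (Menu : Finset (Bundle M)) : Prop :=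
  Menu.Nonempty ∧ ∅ ∉ Menu

/-- The complete menu `2^S` of all nonempty bundles. -/
noncomputable def completeMenu (M : ℕ) : Finset (Bundle M) :=
  Finset.univ.erase ∅

/-- A feasible allocation: a set of pairwise disjoint bundles from the menu. -/
def Feasible (M : ℕ) (Menu X : Finset (Bundle M)) : Prop :=
  X ⊆ Menu ∧ ∀ b ∈ X, ∀ b' ∈ X, b ≠ b' → Disjoint b b'

/-- The maximum of `∑ b ∈ X, f b` over feasible allocations `X` from the menu. -/
noncomputable def maxAlloc (M : ℕ) (Menu : Finset (Bundle M)) (f : Bundle M → ℝ) : ℝ :=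
  sSup {y : ℝ | ∃ X : Finset (Bundle M), Feasible M Menu X ∧ y = ∑ b ∈ X, f b}

/-- The `k`-th highest value among `w 0, …, w (N-1)` (for `1 ≤ k ≤ N`):
the maximum over sets `T` of `k` bidders of the minimum of `w` on `T`. -/
noncomputable def kthHighest (N : ℕ) (w : Fin N → ℝ) (k : ℕ) : ℝ :=
  sSup {x : ℝ | ∃ T : Finset (Fin N), T.card = k ∧ x = sInf (w '' (T : Set (Fin N)))}

/-- The `k`-th rank guarantee `R^k_𝓜(v)`. -/
noncomputable def rankGuarantee (M N : ℕ) (Menu : Finset (Bundle M))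
    (v : Fin N → Valuation M) (k : ℕ) : ℝ :=
  maxAlloc M Menu fun b => kthHighest N (fun n => v n b) k

/-- The ex-post efficient surplus: the maximum over feasible allocations `X` with
`|X| ≤ N` and injective assignments `ι` of bundles in `X` to bidders of the total value. -/
noncomputable def surplusEx (M N : ℕ) (Menu : Finset (Bundle M))
    (v : Fin N → Valuation M) : ℝ :=
  sSup {y : ℝ | ∃ X : Finset (Bundle M), Feasible M Menu X ∧ X.card ≤ N ∧
    ∃ ι : Bundle M → Fin N, Set.InjOn ι ↑X ∧ y = ∑ b ∈ X, v (ι b) b}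

/-- The average `F̄ = (1/N) ∑ₙ Fₙ` of the bidder-marginals of `F`. -/
noncomputable def avgMarginal (M N : ℕ) (F : Measure (Fin N → Valuation M)) :
    Measure (Valuation M) :=
  (N : ℝ≥0∞)⁻¹ • ∑ n : Fin N, F.map (fun v => v n)

/-- The ex-ante efficient surplus `V_𝓜(F)`. -/
noncomputable def Vsurplus (M N : ℕ) (Menu : Finset (Bundle M))
    (F : Measure (Fin N → Valuation M)) : ℝ :=
  ∫ v, surplusEx M N Menu v ∂F

/-- A Borel probability measure on valuation profiles (supported on profiles of
valuations bounded by `vbar`). -/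
def ProfileOK (M N : ℕ) (vbar : ℝ) (F : Measure (Fin N → Valuation M)) : Prop :=
  IsProbabilityMeasure F ∧ F {v | ∀ n, IsValuation M vbar (v n)} = 1

/-- A Borel probability measure on valuations (supported on valuations bounded by `vbar`). -/
def ValOK (M : ℕ) (vbar : ℝ) (G : Measure (Valuation M)) : Prop :=
  IsProbabilityMeasure G ∧ G {w | IsValuation M vbar w} = 1

/-- `κ` is a partition of the bundle `b` into nonempty, pairwise disjoint parts. -/
def IsPartitionOf (M : ℕ) (κ : Finset (Bundle M)) (b : Bundle M) : Prop :=
  (∀ c ∈ κ, c ≠ ∅) ∧ (∀ c ∈ κ, ∀ c' ∈ κ, c ≠ c' → Disjoint c c') ∧ κ.sup id = b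

/-- Feasibility for homogeneous goods: total number of allocated items is at most `M`. -/
def FeasibleQ (M : ℕ) (Menu X : Finset (Bundle M)) : Prop :=
  X ⊆ Menu ∧ ∑ b ∈ X, b.card ≤ M

/-- The maximum of `∑ b ∈ X, f b` over homogeneous-goods-feasible allocations `X`. -/
noncomputable def maxAllocQ (M : ℕ) (Menu : Finset (Bundle M)) (f : Bundle M → ℝ) : ℝ :=
  sSup {y : ℝ | ∃ X : Finset (Bundle M), FeasibleQ M Menu X ∧ y = ∑ b ∈ X, f b}

/-- An assignment of pairwise disjoint bundles to the `N` bidders. -/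
def IsAssignment (M N : ℕ) (a : Fin N → Bundle M) : Prop :=
  ∀ n n' : Fin N, n ≠ n' → Disjoint (a n) (a n')

/-- An assignment is efficient if it maximizes total value over all assignments. -/
def IsEfficient (M N : ℕ) (v : Fin N → Valuation M) (a : Fin N → Bundle M) : Prop :=
  IsAssignment M N a ∧
    ∀ a' : Fin N → Bundle M, IsAssignment M N a' → ∑ n, v n (a' n) ≤ ∑ n, v n (a n)

/-- The VCG revenue at the efficient assignment `a`: the sum over bidders `n` of
`max_{assignments to bidders other than n} ∑_{n' ≠ n} v^{n'} − ∑_{n' ≠ n} v^{n'}(a n')`. -/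
noncomputable def vcgRevenue (M N : ℕ) (v : Fin N → Valuation M)
    (a : Fin N → Bundle M) : ℝ :=
  ∑ n : Fin N,
    (sSup {y : ℝ | ∃ a' : Fin N → Bundle M, IsAssignment M N a' ∧ a' n = ∅ ∧
        y = ∑ n' ∈ Finset.univ.erase n, v n' (a' n')}
      - ∑ n' ∈ Finset.univ.erase n, v n' (a n'))

/-- An unbounded valuation: value `0` for the empty bundle and nonnegative values. -/
def IsValuationNN (M : ℕ) (v : Valuation M) : Prop :=
  v ∅ = 0 ∧ ∀ b : Bundle M, 0 ≤ v b

/-- The top-`(k-1)/N` quantile of `v b` under `G`. -/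
noncomputable def quantileQ (M N k : ℕ) (G : Measure (Valuation M)) (b : Bundle M) : ℝ :=
  sInf {q : ℝ | 0 ≤ q ∧ G {w | q < w b} ≤ ((k - 1 : ℕ) : ℝ≥0∞) / (N : ℝ≥0∞)}

open Finset

section KthHighest

variable {N k : ℕ} (w : Fin N → ℝ)

lemma exists_card_eq_kthHighest_eq_sInf (hk : k ≤ N) :
    ∃ T : Finset (Fin N), #T = k ∧ kthHighest N w k = sInf (w '' T) := by
  set K := {x : ℝ | ∃ T : Finset (Fin N), #T = k ∧ x = sInf (w '' T)}
  have hK : K.Finite :=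
    (Set.finite_range fun T : Finset (Fin N) => sInf (w '' T)).subset
      fun _ ⟨T, _, hx⟩ => ⟨T, hx.symm⟩
  have hne : K.Nonempty := by
    obtain ⟨T, -, hT⟩ := exists_subset_card_eq (show k ≤ #(univ : Finset (Fin N)) by simpa)
    exact ⟨_, T, hT, rfl⟩
  exact hne.csSup_mem hK

lemma kthHighest_le_of_mem {T : Finset (Fin N)} (hT : kthHighest N w k = sInf (w '' T))
    {t : Fin N} (ht : t ∈ T) : kthHighest N w k ≤ w t :=
  hT ▸ csInf_le (T.finite_toSet.image w).bddBelow ⟨t, ht, rfl⟩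

lemma kthHighest_nonneg (hw : ∀ n, 0 ≤ w n) (hk₀ : 0 < k) (hk : k ≤ N) :
    0 ≤ kthHighest N w k := by
  obtain ⟨T, hTk, hT⟩ := exists_card_eq_kthHighest_eq_sInf w hk
  rw [hT]
  exact le_csInf ((card_pos.mp (hTk ▸ hk₀)).to_set.image w) (by rintro _ ⟨t, -, rfl⟩; exact hw t)

lemma exists_notMem_kthHighest_le (hk : k ≤ N) {B : Finset (Fin N)} (hB : #B < k) :
    ∃ t ∉ B, kthHighest N w k ≤ w t := by
  obtain ⟨T, hTk, hT⟩ := exists_card_eq_kthHighest_eq_sInf w hk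
  obtain ⟨t, ht, htB⟩ := not_subset.mp fun h : T ⊆ B => (card_le_card h).not_gt (hTk ▸ hB)
  exact ⟨t, htB, kthHighest_le_of_mem w hT ht⟩

end KthHighest

lemma exists_injOn_kthHighest_le {α : Type*} [DecidableEq α] {N k : ℕ} (w : α → Fin N → ℝ)
    (hk₀ : 0 < k) (hk : k ≤ N) (c : Finset α) (F : Finset (Fin N)) (hc : #F + #c ≤ k) :
    ∃ g : α → Fin N, Set.InjOn g c ∧ ∀ s ∈ c, g s ∉ F ∧ kthHighest N (w s) k ≤ w s (g s) := by
  induction c using Finset.induction_on generalizing F with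
  | empty => exact ⟨fun _ => ⟨0, by omega⟩, by simp, by simp⟩
  | @insert s c hs ih =>
    rw [card_insert_of_notMem hs] at hc
    obtain ⟨t, htF, hst⟩ := exists_notMem_kthHighest_le (w s) hk (show #F < k by omega)
    have htF' : #(insert t F) ≤ #F + 1 := card_insert_le t F
    obtain ⟨g, hginj, hg⟩ := ih (insert t F) (by omega)
    have hgt : ∀ s' ∈ c, g s' ≠ t := fun s' hs' h => (hg s' hs').1 (h ▸ mem_insert_self _ _)
    have hupd : ∀ s' ∈ c, Function.update g s t s' = g s' := fun s' hs' =>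
      Function.update_of_ne (ne_of_mem_of_not_mem hs' hs) _ _
    refine ⟨Function.update g s t, ?_, ?_⟩
    · rw [coe_insert, Set.injOn_insert (by exact_mod_cast hs), Function.update_self]
      refine ⟨hginj.congr fun s' hs' => (hupd s' hs').symm, ?_⟩
      rintro ⟨s', hs', he⟩
      exact hgt s' hs' ((hupd s' hs').symm.trans he)
    · intro s' hs'
      rcases mem_insert.mp hs' with rfl | hs'
      · exact ⟨by simpa using htF, by simpa using hst⟩
      · rw [hupd s' hs']
        exact ⟨fun h => (hg s' hs').1 (mem_insert_of_mem h), (hg s' hs').2⟩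

variable {M N : ℕ}

namespace IsAssignment

variable {a : Fin N → Bundle M} (ha : IsAssignment M N a)
include ha

lemma sum_card_le : ∑ t, #(a t) ≤ M := by
  classical
  rw [← card_biUnion fun x _ y _ hxy => ha x y hxy]
  exact (card_le_univ _).trans_eq (Fintype.card_fin M)

lemma exists_eq_empty (hN : M < N) : ∃ n, a n = ∅ := by
  by_contra! h
  have := card_nsmul_le_sum univ (fun t => #(a t)) 1 fun t _ => card_pos.mpr (h t)
  simp only [card_univ, Fintype.card_fin, smul_eq_mul, mul_one] at this
  exact (this.trans ha.sum_card_le).not_gt hN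

lemma card_filter_nonempty_add_card_le (n : Fin N) :
    #((univ.erase n).filter fun t => (a t).Nonempty) + #(a n) ≤ M := by
  set H := (univ.erase n).filter fun t => (a t).Nonempty
  have hnH : n ∉ H := by simp [H]
  calc #H + #(a n) ≤ ∑ t ∈ H, #(a t) + #(a n) := by
        gcongr
        simpa using card_nsmul_le_sum H (fun t => #(a t)) 1 fun t ht =>
          card_pos.mpr (mem_filter.mp ht).2
    _ = ∑ t ∈ insert n H, #(a t) := by rw [sum_insert hnH, add_comm]
    _ ≤ ∑ t, #(a t) := sum_le_sum_of_subset (subset_univ _)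
    _ ≤ M := ha.sum_card_le

lemma update_singleton {s : Fin M} (hs : ∀ t, s ∉ a t) (n : Fin N) :
    IsAssignment M N (Function.update a n {s}) := by
  intro x y hxy
  simp only [Function.update_apply]
  split_ifs with hx hy hy
  · exact absurd (hx.trans hy.symm) hxy
  · exact disjoint_singleton_left.mpr (hs y)
  · exact disjoint_singleton_right.mpr (hs x)
  · exact ha x y hxy

end IsAssignment

lemma exists_isEfficient (v : Fin N → Valuation M) : ∃ a, IsEfficient M N v a := by
  classical
  obtain ⟨a, ha, hmax⟩ := exists_max_image (univ.filter (IsAssignment M N))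
    (fun a => ∑ n, v n (a n)) ⟨fun _ => ∅, by simp [IsAssignment]⟩
  exact ⟨a, (mem_filter.mp ha).2, fun a' ha' => hmax a' (by simpa using ha')⟩

section Efficiency

variable {v : Fin N → Valuation M} {a : Fin N → Bundle M}

lemma IsEfficient.update_singleton (h : IsEfficient M N v a) {n : Fin N} (hn : a n = ∅)
    {s : Fin M} (hs : ∀ t, s ∉ a t) (hv0 : v n ∅ = 0) (hvs : 0 ≤ v n {s}) :
    IsEfficient M N v (Function.update a n {s}) := by
  refine ⟨h.1.update_singleton hs n, fun a' ha' => (h.2 a' ha').trans (sum_le_sum fun t _ => ?_)⟩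
  rcases eq_or_ne t n with rfl | ht
  · simpa [hn, hv0] using hvs
  · simp [ht]

/-- Take an efficient assignment allocating the most items: an unallocated item could be handed
to a bidder left empty-handed (one exists as `M < N`) without loss of value. -/
lemma exists_isEfficient_forall_mem (hN : M < N) (hv0 : ∀ n, v n ∅ = 0)
    (hv : ∀ n s, 0 ≤ v n {s}) : ∃ a, IsEfficient M N v a ∧ ∀ s, ∃ n, s ∈ a n := by
  classical
  obtain ⟨a₀, ha₀⟩ := exists_isEfficient v
  obtain ⟨a, ha, hmax⟩ := exists_max_image (univ.filter (IsEfficient M N v))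
    (fun a => ∑ n, #(a n)) ⟨a₀, by simpa using ha₀⟩
  replace ha : IsEfficient M N v a := (mem_filter.mp ha).2
  refine ⟨a, ha, fun s => ?_⟩
  by_contra! hs
  obtain ⟨n, hn⟩ := ha.1.exists_eq_empty hN
  have hle := hmax _ (by simpa using ha.update_singleton hn hs (hv0 n) (hv n s))
  refine hle.not_gt (sum_lt_sum (fun t _ => ?_) ⟨n, mem_univ n, by simp [hn]⟩)
  rcases eq_or_ne t n with rfl | ht
  · simp [hn]
  · simp [ht]

end Efficiency

noncomputable def welfareWithout (v : Fin N → Valuation M) (n : Fin N) : ℝ :=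
  sSup {y : ℝ | ∃ a' : Fin N → Bundle M, IsAssignment M N a' ∧ a' n = ∅ ∧
    y = ∑ n' ∈ univ.erase n, v n' (a' n')}

def reassign (a : Fin N → Bundle M) (n : Fin N) (g : Fin M → Fin N) : Fin N → Bundle M :=
  Function.update (fun t => a t ∪ (a n).filter (g · = t)) n ∅

section VCG

variable {v : Fin N → Valuation M} {a : Fin N → Bundle M}

lemma vcgRevenue_eq_sum :
    vcgRevenue M N v a = ∑ n, (welfareWithout v n - ∑ n' ∈ univ.erase n, v n' (a n')) := rfl

lemma sum_le_welfareWithout {a' : Fin N → Bundle M} (ha' : IsAssignment M N a') {n : Fin N}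
    (hn : a' n = ∅) : ∑ n' ∈ univ.erase n, v n' (a' n') ≤ welfareWithout v n := by
  refine le_csSup ((Set.finite_range fun a' : Fin N → Bundle M =>
    ∑ n' ∈ univ.erase n, v n' (a' n')).subset ?_).bddAbove ⟨a', ha', hn, rfl⟩
  rintro _ ⟨a'', -, -, rfl⟩
  exact ⟨a'', rfl⟩

lemma IsAssignment.reassign (ha : IsAssignment M N a) (n : Fin N) (g : Fin M → Fin N) :
    IsAssignment M N (reassign a n g) := by
  intro x y hxy
  simp only [RankGuaranteedAuctions.reassign, Function.update_apply]
  split_ifs with hx hy hy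
  · exact disjoint_empty_left _
  · exact disjoint_empty_left _
  · exact disjoint_empty_right _
  refine disjoint_union_left.mpr ⟨disjoint_union_right.mpr ⟨ha x y hxy, ?_⟩,
    disjoint_union_right.mpr ⟨?_, ?_⟩⟩
  · exact (ha x n hx).mono_right (filter_subset _ _)
  · exact (ha n y (Ne.symm hy)).mono_left (filter_subset _ _)
  · exact disjoint_filter.mpr fun s _ hsx hsy => hxy (hsx.symm.trans hsy)

lemma sum_erase_reassign {n : Fin N} {g : Fin M → Fin N} (hg : Set.InjOn g (a n))
    (hgn : ∀ s ∈ a n, g s ≠ n ∧ a (g s) = ∅) (hv0 : ∀ t, v t ∅ = 0) :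
    ∑ t ∈ univ.erase n, v t (reassign a n g t) =
      ∑ t ∈ univ.erase n, v t (a t) + ∑ s ∈ a n, v (g s) {s} := by
  have hsingle : ∀ s ∈ a n, reassign a n g (g s) = {s} := by
    intro s hs
    rw [reassign, Function.update_of_ne (hgn s hs).1, (hgn s hs).2, empty_union]
    ext s'
    simp only [mem_filter, mem_singleton]
    refine ⟨fun ⟨hs', h⟩ => hg hs' hs h, ?_⟩
    rintro rfl
    exact ⟨hs, rfl⟩
  have hoff : ∀ t ∈ univ.erase n, t ∉ (a n).image g → reassign a n g t = a t := by
    intro t ht hti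
    rw [reassign, Function.update_of_ne (ne_of_mem_erase ht), union_eq_left]
    intro s hs
    obtain ⟨hs, hst⟩ := mem_filter.mp hs
    exact absurd (hst ▸ mem_image_of_mem g hs) hti
  have himage : (a n).image g ⊆ univ.erase n := by
    intro t ht
    obtain ⟨s, hs, rfl⟩ := mem_image.mp ht
    exact mem_erase.mpr ⟨(hgn s hs).1, mem_univ _⟩
  rw [← sub_eq_iff_eq_add', ← sum_sub_distrib,
    ← sum_subset himage fun t ht hti => by rw [hoff t ht hti, sub_self], sum_image hg]
  exact sum_congr rfl fun s hs => by rw [hsingle s hs, (hgn s hs).2, hv0, sub_zero]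

/-- Each item of `a n` can be rerouted to its own bidder among the `M + 1` highest for it who
wins nothing under `a`, since `n` and the other winners are at most `M + 1 - #(a n)` bidders. -/
lemma sum_kthHighest_le_vcgPayment (hv0 : ∀ t, v t ∅ = 0) (hN : M + 1 ≤ N)
    (ha : IsAssignment M N a) (n : Fin N) :
    ∑ s ∈ a n, kthHighest N (fun t => v t {s}) (M + 1) ≤
      welfareWithout v n - ∑ t ∈ univ.erase n, v t (a t) := by
  classical
  set F := insert n ((univ.erase n).filter fun t => (a t).Nonempty)
  have hF : #F + #(a n) ≤ M + 1 := by
    have := ha.card_filter_nonempty_add_card_le n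
    have : #F ≤ _ + 1 := card_insert_le _ _
    omega
  obtain ⟨g, hginj, hg⟩ :=
    exists_injOn_kthHighest_le (fun s t => v t {s}) M.succ_pos hN (a n) F hF
  have hgn : ∀ s ∈ a n, g s ≠ n ∧ a (g s) = ∅ := fun s hs => by
    have hgF := (hg s hs).1
    have hne : g s ≠ n := fun h => hgF (h ▸ mem_insert_self _ _)
    refine ⟨hne, not_nonempty_iff_eq_empty.mp fun h => hgF (mem_insert_of_mem ?_)⟩
    exact mem_filter.mpr ⟨mem_erase.mpr ⟨hne, mem_univ _⟩, h⟩
  calc ∑ s ∈ a n, kthHighest N (fun t => v t {s}) (M + 1)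
      ≤ ∑ s ∈ a n, v (g s) {s} := sum_le_sum fun s hs => (hg s hs).2
    _ = ∑ t ∈ univ.erase n, v t (reassign a n g t) - ∑ t ∈ univ.erase n, v t (a t) := by
        rw [sum_erase_reassign hginj hgn hv0]; ring
    _ ≤ _ := sub_le_sub_right (sum_le_welfareWithout (ha.reassign n g)
        (Function.update_self _ _ _)) _

lemma sum_kthHighest_le_vcgRevenue (hv0 : ∀ t, v t ∅ = 0) (hN : M + 1 ≤ N)
    (ha : IsAssignment M N a) (hall : ∀ s, ∃ n, s ∈ a n) :
    ∑ s, kthHighest N (fun t => v t {s}) (M + 1) ≤ vcgRevenue M N v a := by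
  classical
  have hcover : univ.biUnion a = univ :=
    eq_univ_iff_forall.mpr fun s => mem_biUnion.mpr ((hall s).imp fun n hn => ⟨mem_univ n, hn⟩)
  rw [vcgRevenue_eq_sum, ← hcover, sum_biUnion fun x _ y _ hxy => ha x y hxy]
  exact sum_le_sum fun n _ => sum_kthHighest_le_vcgPayment hv0 hN ha n

end VCG

lemma maxAlloc_le_sum {Menu : Finset (Bundle M)} {f : Bundle M → ℝ}
    (hf : ∀ b ∈ Menu, 0 ≤ f b) : maxAlloc M Menu f ≤ ∑ b ∈ Menu, f b := by
  refine Real.sSup_le ?_ (sum_nonneg hf)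
  rintro _ ⟨X, ⟨hX, -⟩, rfl⟩
  exact sum_le_sum_of_subset_of_nonneg hX fun b hb _ => hf b hb

lemma rankGuarantee_image_singleton_le {v : Fin N → Valuation M} {k : ℕ}
    (hv : ∀ n s, 0 ≤ v n {s}) (hk₀ : 0 < k) (hk : k ≤ N) :
    rankGuarantee M N (univ.image fun s : Fin M => ({s} : Bundle M)) v k ≤
      ∑ s, kthHighest N (fun n => v n {s}) k := by
  rw [rankGuarantee, ← sum_image (f := fun b => kthHighest N (fun n => v n b) k)
    fun x _ y _ h => singleton_injective h]
  refine maxAlloc_le_sum fun b hb => ?_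
  obtain ⟨s, -, rfl⟩ := mem_image.mp hb
  exact kthHighest_nonneg _ (fun n => hv n s) hk₀ hk

theorem vcg_rank_guarantee_of_weak_substitutability_general
    (M N : ℕ) (vbar : ℝ) (hN : M + 1 ≤ N)
    (v : Fin N → Valuation M) (hv : ∀ n, IsValuation M vbar (v n)) :
    (∃ a : Fin N → Bundle M, IsEfficient M N v a ∧ ∀ s : Fin M, ∃ n, s ∈ a n) ∧
    ∀ a : Fin N → Bundle M, IsEfficient M N v a → (∀ s : Fin M, ∃ n, s ∈ a n) →
      vcgRevenue M N v a ≥ ∑ s : Fin M, kthHighest N (fun n => v n {s}) (M + 1) ∧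
      vcgRevenue M N v a ≥
        rankGuarantee M N (Finset.univ.image fun s : Fin M => ({s} : Bundle M)) v
          (M + 1) := by
  have hv0 : ∀ n, v n ∅ = 0 := fun n => (hv n).1
  have hvs : ∀ n s, 0 ≤ v n {s} := fun n s => ((hv n).2 {s}).1
  refine ⟨exists_isEfficient_forall_mem hN hv0 hvs, fun a ha hall => ?_⟩
  have hrev := sum_kthHighest_le_vcgRevenue hv0 hN ha.1 hall
  exact ⟨hrev, (rankGuarantee_image_singleton_le hvs M.succ_pos hN).trans hrev⟩

/-- Proposition 4, rank guarantee of the Vickrey auction: with `N ≥ M + 1`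
and weakly substitutable bidder valuations, there exists an efficient assignment
allocating all items, and for every such efficient assignment the VCG revenue is at least
`∑_{o∈S} v^{(M+1)}_{{o}}`, equivalently at least `R^{M+1}_{𝓜_S}(v)` for the menu `𝓜_S` of
all singleton bundles. -/
theorem vcg_rank_guarantee_of_weak_substitutability
    (M N : ℕ) (hM : 1 ≤ M) (vbar : ℝ) (hvbar : 0 ≤ vbar) (hN : M + 1 ≤ N)
    (v : Fin N → Valuation M) (hv : ∀ n, IsValuation M vbar (v n))
    (hsub : ∀ n : Fin N, ∀ b : Bundle M, v n b ≤ ∑ s ∈ b, v n {s}) :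
    (∃ a : Fin N → Bundle M, IsEfficient M N v a ∧ ∀ s : Fin M, ∃ n, s ∈ a n) ∧
    ∀ a : Fin N → Bundle M, IsEfficient M N v a → (∀ s : Fin M, ∃ n, s ∈ a n) →
      vcgRevenue M N v a ≥ ∑ s : Fin M, kthHighest N (fun n => v n {s}) (M + 1) ∧
      vcgRevenue M N v a ≥
        rankGuarantee M N (Finset.univ.image fun s : Fin M => ({s} : Bundle M)) v
          (M + 1) :=
  vcg_rank_guarantee_of_weak_substitutability_general M N vbar hN v hv

end RankGuaranteedAuctions
end

section
/- (VCG is not rank-guaranteed.) For every N ≥ 4 there exist a set S of M = 2 items {a, c}, a valuation profile v = (v¹,…,vᴺ) with values in [0,1], and an efficient assignment b* allocating all items, such that R_VCG(v; b*) = 0 while Rᵏ_𝓜(v) ≥ 1 for the menu 𝓜 = {{a},{c},{a,c}} and every k with 2 ≤ k ≤ N − 2. -/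
open MeasureTheory
open scoped ENNReal BigOperators

namespace RankGuaranteedAuctions

/-!
Bidders `0` and `1` are unit-demand for the items `0` and `1` respectively, every other bidder
values only the grand bundle `{0, 1}`, and all these values are `1`. Giving item `0` to bidder `0`
and item `1` to bidder `1` is efficient with welfare `2`, and no bidder is pivotal: without
bidder `0` (or `1`) only item `1` (or `0`) is of any use to the others, so they can obtain at
most the `1` they already get, and without any other bidder the welfare `2` is still reached.
Hence all VCG payments vanish.
On the other hand all `N` bidders value `{0, 1}` at `1`, so already the single bundle `{0, 1}`
yields a `k`-th rank guarantee of `1` for every `1 ≤ k ≤ N`.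
-/

open Finset

lemma kthHighest_const {N k : ℕ} (c : ℝ) (hk : 1 ≤ k) (hkN : k ≤ N) :
    kthHighest N (fun _ => c) k = c := by
  have hconst : ∀ T : Finset (Fin N), T.card = k → sInf ((fun _ => c) '' (T : Set (Fin N))) = c :=
    fun T hT => by
      rw [Set.Nonempty.image_const (by rw [coe_nonempty, ← card_pos]; omega), csInf_singleton]
  have hvalues : {x : ℝ | ∃ T : Finset (Fin N), T.card = k ∧
      x = sInf ((fun _ => c) '' (T : Set (Fin N)))} = {c} := by
    ext x
    constructor
    · rintro ⟨T, hT, rfl⟩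
      exact hconst T hT
    · rintro rfl
      obtain ⟨T, -, hT⟩ := exists_subset_card_eq (s := (univ : Finset (Fin N))) (by simpa using hkN)
      exact ⟨T, hT, (hconst T hT).symm⟩
  rw [kthHighest, hvalues, csSup_singleton]

lemma le_maxAlloc {M : ℕ} {Menu X : Finset (Bundle M)} (f : Bundle M → ℝ)
    (hX : Feasible M Menu X) : ∑ b ∈ X, f b ≤ maxAlloc M Menu f := by
  refine le_csSup ((Set.finite_range fun Y : Finset (Bundle M) => ∑ b ∈ Y, f b).subset ?_).bddAbove
    ⟨X, hX, rfl⟩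
  rintro y ⟨Y, -, rfl⟩
  exact ⟨Y, rfl⟩

section Assignments

variable {M N : ℕ} {a : Fin N → Bundle M}

lemma IsAssignment.update_empty (ha : IsAssignment M N a) (n : Fin N) :
    IsAssignment M N (Function.update a n ∅) := by
  intro i j hij
  rcases eq_or_ne i n with rfl | hi
  · simp
  rcases eq_or_ne j n with rfl | hj
  · simp
  simpa [Function.update_of_ne hi, Function.update_of_ne hj] using ha i j hij

/-- Each VCG payment is nonnegative, because dropping the bundle of bidder `n` from `a` is one of
the alternatives for the other bidders; so the revenue vanishes once no bidder is pivotal. -/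
lemma vcgRevenue_eq_zero_of_forall_le {v : Fin N → Valuation M} (ha : IsAssignment M N a)
    (hpivot : ∀ n a', IsAssignment M N a' → a' n = ∅ →
      ∑ n' ∈ univ.erase n, v n' (a' n') ≤ ∑ n' ∈ univ.erase n, v n' (a n')) :
    vcgRevenue M N v a = 0 := by
  refine sum_eq_zero fun n _ => ?_
  have hattained : ∑ n' ∈ univ.erase n, v n' (a n') ∈ {y : ℝ | ∃ a' : Fin N → Bundle M,
      IsAssignment M N a' ∧ a' n = ∅ ∧ y = ∑ n' ∈ univ.erase n, v n' (a' n')} := by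
    refine ⟨Function.update a n ∅, ha.update_empty n, by simp, sum_congr rfl fun n' hn' => ?_⟩
    rw [Function.update_of_ne (ne_of_mem_erase hn')]
  have hmax : IsGreatest _ _ := ⟨hattained, by rintro y ⟨a', ha', han, rfl⟩; exact hpivot n a' ha' han⟩
  rw [hmax.csSup_eq, sub_self]

def itemIndicator (s : Fin M) : Valuation M := fun b => if s ∈ b then 1 else 0

lemma itemIndicator_nonneg (s : Fin M) (b : Bundle M) : 0 ≤ itemIndicator s b := by
  unfold itemIndicator
  split_ifs <;> norm_num

lemma IsAssignment.sum_itemIndicator_le_one (ha : IsAssignment M N a) (s : Fin M)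
    (t : Finset (Fin N)) : ∑ n ∈ t, itemIndicator s (a n) ≤ 1 := by
  have hcard : #{n ∈ t | s ∈ a n} ≤ 1 :=
    card_le_one.mpr fun i hi j hj => by
      by_contra hij
      exact disjoint_left.mp (ha i j hij) (mem_filter.mp hi).2 (mem_filter.mp hj).2
  simp only [itemIndicator, sum_boole]
  exact_mod_cast hcard

lemma IsAssignment.sum_le_one_of_le_itemIndicator {v : Fin N → Valuation M}
    (ha : IsAssignment M N a) (s : Fin M) {t : Finset (Fin N)}
    (hv : ∀ n ∈ t, ∀ b, v n b ≤ itemIndicator s b) : ∑ n ∈ t, v n (a n) ≤ 1 :=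
  (sum_le_sum fun n hn => hv n hn (a n)).trans (ha.sum_itemIndicator_le_one s t)

end Assignments

section Example

variable {N : ℕ}

def exampleProfile (N : ℕ) : Fin N → Valuation 2 := fun n b =>
  if (n : ℕ) = 0 then itemIndicator 0 b
  else if (n : ℕ) = 1 then itemIndicator 1 b
  else if b = {0, 1} then 1 else 0

def exampleAssignment (N : ℕ) : Fin N → Bundle 2 := fun n =>
  if (n : ℕ) = 0 then {0} else if (n : ℕ) = 1 then {1} else ∅

lemma exampleProfile_isValuation (n : Fin N) : IsValuation 2 1 (exampleProfile N n) := by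
  refine ⟨?_, fun b => ?_⟩ <;> unfold exampleProfile itemIndicator <;> split_ifs <;>
    simp_all [(insert_ne_empty _ _).symm]

lemma exampleProfile_pair (n : Fin N) : exampleProfile N n {0, 1} = 1 := by
  unfold exampleProfile itemIndicator
  split_ifs <;> simp_all

lemma exampleProfile_le_itemIndicator_zero {n : Fin N} (hn : (n : ℕ) ≠ 1) (b : Bundle 2) :
    exampleProfile N n b ≤ itemIndicator 0 b := by
  unfold exampleProfile itemIndicator
  split_ifs <;> simp_all

lemma exampleProfile_le_itemIndicator_one {n : Fin N} (hn : (n : ℕ) ≠ 0) (b : Bundle 2) :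
    exampleProfile N n b ≤ itemIndicator 1 b := by
  unfold exampleProfile itemIndicator
  split_ifs <;> simp_all

lemma exampleAssignment_isAssignment : IsAssignment 2 N (exampleAssignment N) := by
  intro i j hij
  have : (i : ℕ) ≠ j := Fin.val_ne_of_ne hij
  unfold exampleAssignment
  split_ifs <;> first | omega | decide

lemma exampleProfile_exampleAssignment (n : Fin N) :
    exampleProfile N n (exampleAssignment N n) = if (n : ℕ) < 2 then 1 else 0 := by
  unfold exampleProfile exampleAssignment itemIndicator
  split_ifs <;> first | omega | simp_all [(insert_ne_empty _ _).symm]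

lemma sum_exampleProfile_exampleAssignment (hN : 2 ≤ N) :
    ∑ n, exampleProfile N n (exampleAssignment N n) = 2 := by
  simp only [exampleProfile_exampleAssignment, sum_boole, Fin.card_filter_val_lt]
  norm_num [hN]

lemma IsAssignment.sum_exampleProfile_le_two {a : Fin N → Bundle 2} (ha : IsAssignment 2 N a)
    (t : Finset (Fin N)) : ∑ n ∈ t, exampleProfile N n (a n) ≤ 2 := by
  have hle : ∀ n b, exampleProfile N n b ≤ itemIndicator 0 b + itemIndicator 1 b := fun n b => by
    by_cases hn : (n : ℕ) = 1
    · linarith [exampleProfile_le_itemIndicator_one (n := n) (by omega) b,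
        itemIndicator_nonneg 0 b]
    · linarith [exampleProfile_le_itemIndicator_zero hn b, itemIndicator_nonneg 1 b]
  calc ∑ n ∈ t, exampleProfile N n (a n)
      ≤ ∑ n ∈ t, itemIndicator 0 (a n) + ∑ n ∈ t, itemIndicator 1 (a n) := by
        rw [← sum_add_distrib]
        exact sum_le_sum fun n _ => hle n (a n)
    _ ≤ 2 := by linarith [ha.sum_itemIndicator_le_one 0 t, ha.sum_itemIndicator_le_one 1 t]

lemma exampleAssignment_isEfficient (hN : 2 ≤ N) :
    IsEfficient 2 N (exampleProfile N) (exampleAssignment N) :=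
  ⟨exampleAssignment_isAssignment, fun _ ha' => by
    rw [sum_exampleProfile_exampleAssignment hN]
    exact ha'.sum_exampleProfile_le_two univ⟩

lemma vcgRevenue_example (hN : 2 ≤ N) :
    vcgRevenue 2 N (exampleProfile N) (exampleAssignment N) = 0 := by
  refine vcgRevenue_eq_zero_of_forall_le exampleAssignment_isAssignment fun n a' ha' _ => ?_
  rw [sum_erase_eq_sub (f := fun m => exampleProfile N m (exampleAssignment N m)) (mem_univ n),
    sum_exampleProfile_exampleAssignment hN,
    exampleProfile_exampleAssignment]
  split_ifs with hn
  · -- without bidder `n < 2`, only the item `1 - n` is of any value to the others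
    have hother : ∀ n' ∈ univ.erase n, ∀ b,
        exampleProfile N n' b ≤ itemIndicator ⟨1 - n, by omega⟩ b := by
      intro n' hn' b
      have : (n' : ℕ) ≠ n := Fin.val_ne_of_ne (ne_of_mem_erase hn')
      obtain h | h : (n : ℕ) = 0 ∨ (n : ℕ) = 1 := by omega
      · simpa [h] using exampleProfile_le_itemIndicator_one (by omega) b
      · simpa [h] using exampleProfile_le_itemIndicator_zero (by omega) b
    linarith [ha'.sum_le_one_of_le_itemIndicator _ hother]
  · linarith [ha'.sum_exampleProfile_le_two (univ.erase n)]

lemma rankGuarantee_example {k : ℕ} (hk : 1 ≤ k) (hkN : k ≤ N) :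
    1 ≤ rankGuarantee 2 N {{0}, {1}, {0, 1}} (exampleProfile N) k := by
  have hfeasible : Feasible 2 {{0}, {1}, {0, 1}} {{0, 1}} :=
    ⟨by simp, fun b hb b' hb' hbb' => absurd ((mem_singleton.mp hb).trans
      (mem_singleton.mp hb').symm) hbb'⟩
  have hpair : kthHighest N (fun n => exampleProfile N n {0, 1}) k = 1 := by
    simp only [exampleProfile_pair]
    exact kthHighest_const 1 hk hkN
  simpa [rankGuarantee, hpair] using le_maxAlloc (fun b => kthHighest N (fun n => exampleProfile N n b) k) hfeasible

end Example

/-- VCG is not rank-guaranteed: for every `N ≥ 4` there are two items, a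
valuation profile with values in `[0,1]`, and an efficient assignment allocating all
items, with VCG revenue `0` while `R^k_𝓜(v) ≥ 1` for the menu `𝓜 = {{a},{c},{a,c}}` and
every `2 ≤ k ≤ N − 2`. -/
theorem vcg_not_rank_guaranteed (N : ℕ) (hN : 4 ≤ N) :
    ∃ (v : Fin N → Valuation 2) (a : Fin N → Bundle 2),
      (∀ n, IsValuation 2 1 (v n)) ∧
      IsEfficient 2 N v a ∧ (∀ s : Fin 2, ∃ n, s ∈ a n) ∧
      vcgRevenue 2 N v a = 0 ∧
      ∀ k : ℕ, 2 ≤ k → k ≤ N - 2 →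
        rankGuarantee 2 N ({({0} : Bundle 2), ({1} : Bundle 2), ({0, 1} : Bundle 2)} :
          Finset (Bundle 2)) v k ≥ 1 := by
  refine ⟨exampleProfile N, exampleAssignment N, exampleProfile_isValuation,
    exampleAssignment_isEfficient (by omega), fun s => ⟨⟨s, by omega⟩, ?_⟩,
    vcgRevenue_example (by omega), fun k hk hkN => rankGuarantee_example (by omega) (by omega)⟩
  fin_cases s <;> simp [exampleAssignment]

end RankGuaranteedAuctions
end
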